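/- Let Λ be a switch function on ℤ (Λ(n) = 1 for n large positive, 0 for n large negative) and P a projection on ℓ²(ℤ, ℂ^{2N}) whose kernel satisfies ∑_{n,n'} ‖P(n,n')‖ (1+|n|)^{−ν} e^{μ|n−n'|} ≤ C < ∞ for some μ, ν > 0 (trace norms of the 2N×2N blocks). Then the commutator [Λ, P] is trace class. -/

import Mathlib

/-!
The `(n, n')` block of `[Λ, P]` is `(Λ n - Λ n') • P(n, n')`. Since `Λ` is constant outside a
finite window `[-m, m]`, `Λ n ≠ Λ n'` forces `|n| ≤ m + |n - n'|`, and polynomial growth is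
dominated by exponential growth, so `|Λ n - Λ n'| ≤ C (1 + |n|)^{-ν} e^{μ |n - n'|}`. It remains
to bound the trace norm by the sum of the trace norms of the blocks: against orthonormal systems
`e, f` of `ℓ²`, `⟪e, T f⟫` splits into the pairings of the blocks with the coordinates `e(n), f(n')`.
These coordinates form Bessel families in `ℂ^{2N}`, and pairing Bessel families with a matrix
`A` gives at most `∑ ‖A wᵢ‖` over its right singular vectors `wᵢ`, which is at most its trace
norm.
-/

open scoped ENNReal InnerProductSpace
set_option maxHeartbeats 1000000
set_option synthInstance.maxHeartbeats 1000000

noncomputable section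

/-- The trace norm, defined as the supremum over pairs of finite orthonormal systems. -/
def traceNorm {H : Type*} [NormedAddCommGroup H] [InnerProductSpace ℂ H]
    (T : H → H) : ℝ≥0∞ :=
  ⨆ (n : ℕ) (e : Fin n → H) (f : Fin n → H) (_ : Orthonormal ℂ e) (_ : Orthonormal ℂ f),
    ∑ i, ENNReal.ofReal ‖(inner ℂ (e i) (T (f i)) : ℂ)‖

/-- `T` is trace class iff its trace norm is finite. -/
def IsTraceClass {H : Type*} [NormedAddCommGroup H] [InnerProductSpace ℂ H]
    (T : H → H) : Prop :=
  traceNorm T ≠ ⊤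

/-- `ℓ²(ℤ, ℂ^{2N})`. -/
abbrev H2N (N : ℕ) := lp (fun _ : ℤ => EuclideanSpace ℂ (Fin (2 * N))) 2

/-- The matrix block `P(n, n') : ℂ^{2N} → ℂ^{2N}` of an operator `P` on `ℓ²(ℤ, ℂ^{2N})`. -/
def block {N : ℕ} (P : H2N N →L[ℂ] H2N N) (n n' : ℤ) :
    EuclideanSpace ℂ (Fin (2 * N)) → EuclideanSpace ℂ (Fin (2 * N)) :=
  fun v => (P (lp.single 2 n' v) : ∀ _ : ℤ, EuclideanSpace ℂ (Fin (2 * N))) n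

/-- `M` is the multiplication operator by `Λ : ℤ → ℝ`. -/
def IsMultOp {N : ℕ} (Λ : ℤ → ℝ) (M : H2N N →L[ℂ] H2N N) : Prop :=
  ∀ (ψ : H2N N) (n : ℤ), (M ψ : ∀ _ : ℤ, EuclideanSpace ℂ (Fin (2 * N))) n = (Λ n : ℂ) • ψ n

/-- A switch function: `1` for large positive argument, `0` for large negative argument. -/
def IsSwitch (Λ : ℤ → ℝ) : Prop :=
  ∃ m : ℤ, (∀ n ≥ m, Λ n = 1) ∧ (∀ n ≤ -m, Λ n = 0)

section TraceNorm

variable {H : Type*} [NormedAddCommGroup H] [InnerProductSpace ℂ H]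

theorem sum_le_traceNorm {ι : Type*} [Fintype ι] {e f : ι → H} (he : Orthonormal ℂ e)
    (hf : Orthonormal ℂ f) (T : H → H) :
    ∑ i, ENNReal.ofReal ‖⟪e i, T (f i)⟫_ℂ‖ ≤ traceNorm T := by
  let σ := Fintype.equivFin ι
  rw [← σ.symm.sum_comp]
  exact le_iSup_of_le (Fintype.card ι) <| le_iSup_of_le (e ∘ σ.symm) <|
    le_iSup_of_le (f ∘ σ.symm) <| le_iSup_of_le (he.comp _ σ.symm.injective) <|
    le_iSup_of_le (hf.comp _ σ.symm.injective) le_rfl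

theorem traceNorm_smul (c : ℂ) (T : H → H) :
    traceNorm (c • T) = ENNReal.ofReal ‖c‖ * traceNorm T := by
  simp only [traceNorm, ENNReal.mul_iSup, Finset.mul_sum, Pi.smul_apply, inner_smul_right,
    norm_mul, ENNReal.ofReal_mul (norm_nonneg c)]

theorem sum_norm_map_le_traceNorm {ι : Type*} [Fintype ι] {w : ι → H} (hw : Orthonormal ℂ w)
    (A : H →ₗ[ℂ] H) (hA : Pairwise fun i j => ⟪A (w i), A (w j)⟫_ℂ = 0) :
    ∑ i, ENNReal.ofReal ‖A (w i)‖ ≤ traceNorm A := by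
  classical
  let J := {i // A (w i) ≠ 0}
  let z : J → H := fun i => ((‖A (w i)‖ : ℂ)⁻¹) • A (w i)
  have hz : Orthonormal ℂ z := by
    refine ⟨fun i => ?_, fun i j hij => ?_⟩
    · simp [z, norm_smul, inv_mul_cancel₀ (norm_ne_zero_iff.mpr i.2)]
    · simp [z, inner_smul_left, inner_smul_right, hA (fun h => hij (Subtype.ext h))]
  have key : ∀ i : J, ⟪z i, A (w i)⟫_ℂ = ‖A (w i)‖ := by
    intro i
    have : (‖A (w i)‖ : ℂ) ≠ 0 := by exact_mod_cast norm_ne_zero_iff.mpr i.2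
    rw [inner_smul_left, inner_self_eq_norm_sq_to_K, map_inv₀, Complex.conj_ofReal]
    field_simp
    rfl
  calc ∑ i, ENNReal.ofReal ‖A (w i)‖
      = ∑ i ∈ Finset.univ.filter (fun i => A (w i) ≠ 0), ENNReal.ofReal ‖A (w i)‖ :=
        (Finset.sum_filter_of_ne fun i _ h => by simpa using h).symm
    _ = ∑ i : J, ENNReal.ofReal ‖A (w i)‖ := Finset.sum_subtype _ (by simp) _
    _ = ∑ i : J, ENNReal.ofReal ‖⟪z i, A (w i)⟫_ℂ‖ := by simp [key]
    _ ≤ traceNorm A := sum_le_traceNorm hz (hw.comp _ Subtype.val_injective) A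

end TraceNorm

/-- The right singular vectors of `A`, i.e. an eigenbasis of `A† A`. -/
theorem LinearMap.exists_orthonormalBasis_pairwise_inner_map_eq_zero {𝕜 E F : Type*} [RCLike 𝕜]
    [NormedAddCommGroup E] [InnerProductSpace 𝕜 E] [FiniteDimensional 𝕜 E]
    [NormedAddCommGroup F] [InnerProductSpace 𝕜 F] [FiniteDimensional 𝕜 F] (A : E →ₗ[𝕜] F) :
    ∃ w : OrthonormalBasis (Fin (Module.finrank 𝕜 E)) 𝕜 E,
      Pairwise fun i j => ⟪A (w i), A (w j)⟫_𝕜 = 0 := by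
  have hA : (LinearMap.adjoint A ∘ₗ A).IsSymmetric := A.isSymmetric_adjoint_comp_self
  refine ⟨hA.eigenvectorBasis rfl, fun i j hij => ?_⟩
  dsimp only
  rw [← LinearMap.adjoint_inner_right, ← LinearMap.comp_apply, hA.apply_eigenvectorBasis,
    inner_smul_right, (hA.eigenvectorBasis rfl).orthonormal.2 hij, mul_zero]

section Bessel

variable {𝕜 E F : Type*} [RCLike 𝕜] [NormedAddCommGroup E] [InnerProductSpace 𝕜 E]
  [NormedAddCommGroup F] [InnerProductSpace 𝕜 F] {κ : Type*} [Fintype κ]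

/-- The coordinates of an orthonormal family in `ℓ²` are no longer orthonormal, but they still
satisfy Bessel's inequality. -/
def IsBessel (u : κ → E) : Prop :=
  ∀ x, ∑ p, ‖⟪u p, x⟫_𝕜‖ ^ 2 ≤ ‖x‖ ^ 2

theorem IsBessel.sum_norm_inner_mul_le {u : κ → F} {v : κ → E} (hu : IsBessel (𝕜 := 𝕜) u)
    (hv : IsBessel (𝕜 := 𝕜) v) (x : E) (y : F) :
    ∑ p, ‖⟪v p, x⟫_𝕜‖ * ‖⟪u p, y⟫_𝕜‖ ≤ ‖x‖ * ‖y‖ := by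
  have hx := (Real.sqrt_le_sqrt (hv x)).trans_eq (Real.sqrt_sq (norm_nonneg x))
  have hy := (Real.sqrt_le_sqrt (hu y)).trans_eq (Real.sqrt_sq (norm_nonneg y))
  exact (Real.sum_mul_le_sqrt_mul_sqrt _ _ _).trans <|
    mul_le_mul hx hy (Real.sqrt_nonneg _) (norm_nonneg _)

/-- Expanding `v p` in the basis `w` and applying Cauchy–Schwarz in `p` for each basis vector. -/
theorem IsBessel.sum_norm_inner_map_le {ι : Type*} [Fintype ι] (w : OrthonormalBasis ι 𝕜 E)
    (A : E →ₗ[𝕜] F) {u : κ → F} {v : κ → E} (hu : IsBessel (𝕜 := 𝕜) u)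
    (hv : IsBessel (𝕜 := 𝕜) v) :
    ∑ p, ‖⟪u p, A (v p)⟫_𝕜‖ ≤ ∑ i, ‖A (w i)‖ := by
  have expand : ∀ p, ⟪u p, A (v p)⟫_𝕜 = ∑ i, ⟪w i, v p⟫_𝕜 * ⟪u p, A (w i)⟫_𝕜 := fun p => by
    conv_lhs => rw [← w.sum_repr' (v p)]
    simp only [map_sum, map_smul, inner_sum, inner_smul_right]
  calc ∑ p, ‖⟪u p, A (v p)⟫_𝕜‖
      ≤ ∑ p, ∑ i, ‖⟪w i, v p⟫_𝕜‖ * ‖⟪u p, A (w i)⟫_𝕜‖ := Finset.sum_le_sum fun p _ => by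
        rw [expand]
        exact (norm_sum_le _ _).trans_eq (by simp only [norm_mul])
    _ = ∑ i, ∑ p, ‖⟪v p, w i⟫_𝕜‖ * ‖⟪u p, A (w i)⟫_𝕜‖ := by
        rw [Finset.sum_comm]
        simp only [norm_inner_symm]
    _ ≤ ∑ i, ‖w i‖ * ‖A (w i)‖ :=
        Finset.sum_le_sum fun i _ => hu.sum_norm_inner_mul_le hv _ _
    _ = ∑ i, ‖A (w i)‖ := by simp [w.orthonormal.1]

end Bessel

theorem sum_norm_inner_map_le_traceNorm {E : Type*} [NormedAddCommGroup E]
    [InnerProductSpace ℂ E] [FiniteDimensional ℂ E] (A : E →ₗ[ℂ] E) {κ : Type*} [Fintype κ]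
    {u v : κ → E} (hu : IsBessel (𝕜 := ℂ) u) (hv : IsBessel (𝕜 := ℂ) v) :
    ∑ p, ENNReal.ofReal ‖⟪u p, A (v p)⟫_ℂ‖ ≤ traceNorm A := by
  obtain ⟨w, hw⟩ := A.exists_orthonormalBasis_pairwise_inner_map_eq_zero
  calc ∑ p, ENNReal.ofReal ‖⟪u p, A (v p)⟫_ℂ‖
      ≤ ∑ i, ENNReal.ofReal ‖A (w i)‖ := by
        rw [← ENNReal.ofReal_sum_of_nonneg (fun _ _ => norm_nonneg _),
          ← ENNReal.ofReal_sum_of_nonneg (fun _ _ => norm_nonneg _)]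
        exact ENNReal.ofReal_le_ofReal (hu.sum_norm_inner_map_le w A hv)
    _ ≤ traceNorm A := sum_norm_map_le_traceNorm w.orthonormal A hw

section lp

variable {𝕜 E ι : Type*} [RCLike 𝕜] [NormedAddCommGroup E] [InnerProductSpace 𝕜 E]

theorem Orthonormal.isBessel_apply {κ : Type*} [Fintype κ] {g : κ → lp (fun _ : ι => E) 2}
    (hg : Orthonormal 𝕜 g) (n : ι) : IsBessel (𝕜 := 𝕜) fun p => g p n := by
  classical
  intro x
  have h := hg.sum_inner_products_le (lp.single 2 n x) (s := Finset.univ)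
  rw [lp.norm_single (by norm_num)] at h
  simpa only [lp.inner_single_right] using h

theorem lp.ofReal_norm_inner_le_tsum [DecidableEq ι]
    (T : lp (fun _ : ι => E) 2 →L[𝕜] lp (fun _ : ι => E) 2) (e f : lp (fun _ : ι => E) 2) :
    ENNReal.ofReal ‖⟪e, T f⟫_𝕜‖ ≤
      ∑' q : ι × ι, ENNReal.ofReal ‖⟪e q.1, T (lp.single 2 q.2 (f q.2)) q.1⟫_𝕜‖ := by
  have hcol : HasSum (fun n' => ⟪e, T (lp.single 2 n' (f n'))⟫_𝕜) ⟪e, T f⟫_𝕜 := by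
    have h1 : HasSum (fun n' => T (lp.single 2 n' (f n'))) (T f) :=
      (lp.hasSum_single (by norm_num) f).mapL T
    exact h1.mapL (innerSL 𝕜 e)
  simp only [ofReal_norm]
  rw [ENNReal.tsum_prod', ENNReal.tsum_comm]
  refine hcol.enorm_le_of_bounded ENNReal.summable.hasSum fun n' => ?_
  have h2 := lp.hasSum_inner (𝕜 := 𝕜) e (T (lp.single 2 n' (f n')))
  exact h2.enorm_le_of_bounded ENNReal.summable.hasSum fun _ => le_rfl

end lp

def blockLinearMap {N : ℕ} (T : H2N N →L[ℂ] H2N N) (n n' : ℤ) :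
    EuclideanSpace ℂ (Fin (2 * N)) →ₗ[ℂ] EuclideanSpace ℂ (Fin (2 * N)) where
  toFun := block T n n'
  map_add' x y := by simp only [block, lp.single_add, map_add, lp.coeFn_add, Pi.add_apply]
  map_smul' c x := by
    simp only [block, lp.single_smul, map_smul, lp.coeFn_smul, Pi.smul_apply, RingHom.id_apply]

theorem traceNorm_le_tsum_traceNorm_block {N : ℕ} (T : H2N N →L[ℂ] H2N N) :
    traceNorm T ≤ ∑' q : ℤ × ℤ, traceNorm (block T q.1 q.2) := by
  refine iSup_le fun k => iSup_le fun e => iSup_le fun f => iSup_le fun he => iSup_le fun hf => ?_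
  calc ∑ p, ENNReal.ofReal ‖⟪e p, T (f p)⟫_ℂ‖
      ≤ ∑ p, ∑' q : ℤ × ℤ, ENNReal.ofReal ‖⟪e p q.1, block T q.1 q.2 (f p q.2)⟫_ℂ‖ :=
        Finset.sum_le_sum fun p _ => lp.ofReal_norm_inner_le_tsum T (e p) (f p)
    _ = ∑' q : ℤ × ℤ, ∑ p, ENNReal.ofReal ‖⟪e p q.1, block T q.1 q.2 (f p q.2)⟫_ℂ‖ :=
        (Summable.tsum_finsetSum fun _ _ => ENNReal.summable).symm
    _ ≤ ∑' q : ℤ × ℤ, traceNorm (block T q.1 q.2) := ENNReal.tsum_le_tsum fun q =>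
        sum_norm_inner_map_le_traceNorm (blockLinearMap T q.1 q.2)
          (he.isBessel_apply q.1) (hf.isBessel_apply q.2)

theorem IsMultOp.block_commutator {N : ℕ} {Λ : ℤ → ℝ} {M : H2N N →L[ℂ] H2N N}
    (hM : IsMultOp Λ M) (P : H2N N →L[ℂ] H2N N) (n n' : ℤ) :
    block (M ∘L P - P ∘L M) n n' = ((Λ n - Λ n' : ℝ) : ℂ) • block P n n' := by
  have hsingle : ∀ v, M (lp.single 2 n' v) = (Λ n' : ℂ) • lp.single 2 n' v := fun v => by
    ext m
    rw [hM, lp.coeFn_smul, Pi.smul_apply]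
    by_cases h : m = n'
    · subst h; rw [lp.single_apply_self]
    · rw [lp.single_apply_ne _ _ _ h, smul_zero, smul_zero]
  ext v : 1
  simp only [block, sub_apply, ContinuousLinearMap.comp_apply, lp.coeFn_sub,
    Pi.sub_apply, hsingle, map_smul, lp.coeFn_smul, Pi.smul_apply, Complex.ofReal_sub, sub_smul]
  rw [hM]

theorem one_add_rpow_le_mul_exp {μ ν t : ℝ} (hμ : 0 < μ) (hν : 0 < ν) (ht : 0 ≤ t) :
    (1 + t) ^ ν ≤ (1 + ν / μ) ^ ν * Real.exp (μ * t) := by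
  have hlin : 1 + t ≤ (1 + ν / μ) * Real.exp (μ / ν * t) := by
    have hexp := Real.add_one_le_exp (μ / ν * t)
    have hexpand : (1 + ν / μ) * (μ / ν * t + 1) = 1 + t + ν / μ + μ / ν * t := by
      field_simp; ring
    nlinarith [mul_le_mul_of_nonneg_left hexp (by positivity : (0 : ℝ) ≤ 1 + ν / μ),
      div_nonneg hν.le hμ.le, mul_nonneg (div_nonneg hμ.le hν.le) ht]
  calc (1 + t) ^ ν ≤ ((1 + ν / μ) * Real.exp (μ / ν * t)) ^ ν :=
        Real.rpow_le_rpow (by linarith) hlin hν.le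
    _ = (1 + ν / μ) ^ ν * Real.exp (μ * t) := by
        rw [Real.mul_rpow (by positivity) (Real.exp_pos _).le, ← Real.exp_mul]
        field_simp

namespace IsSwitch

variable {Λ : ℤ → ℝ}

theorem exists_abs_le (hΛ : IsSwitch Λ) : ∃ B, ∀ n, |Λ n| ≤ B := by
  obtain ⟨m, h1, h0⟩ := hΛ
  refine ⟨1 + ∑ j ∈ Finset.Icc (-m) m, |Λ j|, fun n => ?_⟩
  have hsum : 0 ≤ ∑ j ∈ Finset.Icc (-m) m, |Λ j| := Finset.sum_nonneg fun _ _ => abs_nonneg _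
  by_cases hn : n ∈ Finset.Icc (-m) m
  · linarith [Finset.single_le_sum (f := fun j => |Λ j|) (fun _ _ => abs_nonneg _) hn]
  · rcases le_or_gt m n with hm | hm
    · rw [h1 n hm]; simpa using hsum
    · rw [h0 n (by simp only [Finset.mem_Icc, not_and_or, not_le] at hn; omega)]
      simp only [abs_zero]; linarith

/-- `Λ` is constant on each side of `[-|m|, |m|]`, so if `Λ n ≠ Λ n'` and `n` lies outside this
interval, then `n'` lies beyond its opposite end. -/
theorem exists_abs_le_add_abs_sub_of_ne (hΛ : IsSwitch Λ) :
    ∃ m : ℤ, ∀ n n', Λ n ≠ Λ n' → |n| ≤ m + |n - n'| := by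
  obtain ⟨m, h1, h0⟩ := hΛ
  refine ⟨|m|, fun n n' hne => ?_⟩
  have hright : m ≤ n → n' < m := fun hn => by
    by_contra! hn'
    exact hne (by rw [h1 n hn, h1 n' hn'])
  have hleft : n ≤ -m → -m < n' := fun hn => by
    by_contra! hn'
    exact hne (by rw [h0 n hn, h0 n' hn'])
  rcases abs_cases n with ⟨hn, _⟩ | ⟨hn, _⟩ <;> rcases abs_cases m with ⟨hm, _⟩ | ⟨hm, _⟩ <;>
    rcases abs_cases (n - n') with ⟨hd, _⟩ | ⟨hd, _⟩ <;> omega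

theorem exists_abs_sub_le_mul_weight (hΛ : IsSwitch Λ) {μ ν : ℝ} (hμ : 0 < μ) (hν : 0 < ν) :
    ∃ C, 0 ≤ C ∧ ∀ n n' : ℤ, |Λ n - Λ n'| ≤
      C * (Real.rpow (1 + |(n : ℝ)|) (-ν) * Real.exp (μ * |(n : ℝ) - (n' : ℝ)|)) := by
  obtain ⟨B, hB⟩ := hΛ.exists_abs_le
  obtain ⟨m, hm⟩ := hΛ.exists_abs_le_add_abs_sub_of_ne
  have hB0 : 0 ≤ B := (abs_nonneg _).trans (hB 0)
  set K := (1 + ν / μ) ^ ν * Real.exp (μ * m)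
  have hC0 : 0 ≤ 2 * B * K := by positivity
  refine ⟨2 * B * K, hC0, fun n n' => ?_⟩
  by_cases hne : Λ n = Λ n'
  · rw [hne, sub_self, abs_zero, Real.rpow_eq_pow]; positivity
  have hn : |(n : ℝ)| ≤ m + |(n : ℝ) - (n' : ℝ)| := by exact_mod_cast hm n n' hne
  set d := |(n : ℝ) - (n' : ℝ)|
  have hgrowth : (1 + |(n : ℝ)|) ^ ν ≤ K * Real.exp (μ * d) :=
    calc (1 + |(n : ℝ)|) ^ ν ≤ (1 + (m + d)) ^ ν :=
          Real.rpow_le_rpow (by positivity) (by linarith) hν.le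
      _ ≤ (1 + ν / μ) ^ ν * Real.exp (μ * (m + d)) :=
          one_add_rpow_le_mul_exp hμ hν ((abs_nonneg _).trans hn)
      _ = K * Real.exp (μ * d) := by rw [mul_add, Real.exp_add, mul_assoc]
  have hpow : 0 < (1 + |(n : ℝ)|) ^ ν := by positivity
  calc |Λ n - Λ n'| ≤ 2 * B := by linarith [abs_sub (Λ n) (Λ n'), hB n, hB n']
    _ ≤ 2 * B * (K * Real.exp (μ * d) / (1 + |(n : ℝ)|) ^ ν) :=
        le_mul_of_one_le_right (by positivity) ((one_le_div hpow).mpr hgrowth)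
    _ = 2 * B * K * (Real.rpow (1 + |(n : ℝ)|) (-ν) * Real.exp (μ * d)) := by
        rw [Real.rpow_eq_pow, Real.rpow_neg (by positivity)]; ring

end IsSwitch

theorem commutator_switch_projection_traceClass_general {N : ℕ}
    (P : H2N N →L[ℂ] H2N N)
    (Λ : ℤ → ℝ) (hΛ : IsSwitch Λ) (M : H2N N →L[ℂ] H2N N) (hM : IsMultOp Λ M)
    (μ ν : ℝ) (hμ : 0 < μ) (hν : 0 < ν)
    (hdecay : (∑' q : ℤ × ℤ,
        traceNorm (block P q.1 q.2) *
          ENNReal.ofReal (Real.rpow (1 + |(q.1 : ℝ)|) (-ν) *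
            Real.exp (μ * |(q.1 : ℝ) - (q.2 : ℝ)|))) ≠ ⊤) :
    IsTraceClass (fun ψ => (M ∘L P - P ∘L M) ψ) := by
  obtain ⟨C, hC0, hC⟩ := hΛ.exists_abs_sub_le_mul_weight hμ hν
  refine ne_top_of_le_ne_top (ENNReal.mul_ne_top (ENNReal.ofReal_ne_top (r := C)) hdecay) ?_
  calc traceNorm (M ∘L P - P ∘L M)
      ≤ ∑' q : ℤ × ℤ, traceNorm (block (M ∘L P - P ∘L M) q.1 q.2) :=
        traceNorm_le_tsum_traceNorm_block _
    _ = ∑' q : ℤ × ℤ, ENNReal.ofReal |Λ q.1 - Λ q.2| * traceNorm (block P q.1 q.2) := by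
        simp only [hM.block_commutator, traceNorm_smul, Complex.norm_real, Real.norm_eq_abs]
    _ ≤ ∑' q : ℤ × ℤ, ENNReal.ofReal C * (traceNorm (block P q.1 q.2) *
          ENNReal.ofReal (Real.rpow (1 + |(q.1 : ℝ)|) (-ν) *
            Real.exp (μ * |(q.1 : ℝ) - (q.2 : ℝ)|))) := ENNReal.tsum_le_tsum fun q =>
        (mul_le_mul_left (ENNReal.ofReal_le_ofReal (hC q.1 q.2)) _).trans_eq
          (by rw [ENNReal.ofReal_mul hC0]; ring)
    _ = _ := ENNReal.tsum_mul_left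

/-- Let `Λ` be a switch function and `P` a projection on `ℓ²(ℤ, ℂ^{2N})` whose blocks satisfy
`∑_{n,n'} ‖P(n,n')‖₁ (1+|n|)^{-ν} e^{μ |n-n'|} ≤ C < ∞` for some `μ, ν > 0`.  Then the
commutator `[Λ, P]` is trace class. -/
theorem commutator_switch_projection_traceClass {N : ℕ}
    (P : H2N N →L[ℂ] H2N N) (hsa : IsSelfAdjoint P) (hidem : P ∘L P = P)
    (Λ : ℤ → ℝ) (hΛ : IsSwitch Λ) (M : H2N N →L[ℂ] H2N N) (hM : IsMultOp Λ M)
    (μ ν : ℝ) (hμ : 0 < μ) (hν : 0 < ν)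
    (hdecay : (∑' q : ℤ × ℤ,
        traceNorm (block P q.1 q.2) *
          ENNReal.ofReal (Real.rpow (1 + |(q.1 : ℝ)|) (-ν) *
            Real.exp (μ * |(q.1 : ℝ) - (q.2 : ℝ)|))) ≠ ⊤) :
    IsTraceClass (fun ψ => (M ∘L P - P ∘L M) ψ) :=
  commutator_switch_projection_traceClass_general P Λ hΛ M hM μ ν hμ hν hdecay
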